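/- Let C be an integer code of length n, amplitude N = q₁⋯qₙ, cardinality K = |C| ≥ 2, and minimum weighted distance D = D(C). Then for every set of coordinates I ⊆ {1,…,n} with K · wt(I) > N, one has D ≤ wt(I); in other words, D ≤ min{wt(I) : I ⊆ {1,…,n}, K · wt(I) > N}. -/

import Mathlib

/-- The weight of a set `I` of coordinates: the product of the moduli indexed by `I`. -/
def wtS {ι : Type} (q : ι → ℕ) (I : Finset ι) : ℕ := ∏ i ∈ I, q i

/-- The weighted distance between two vectors of `ℤ/q₁ℤ × ⋯ × ℤ/qₙℤ`. -/
def wdist {ι : Type} [Fintype ι] (q : ι → ℕ) (a b : ∀ i : ι, ZMod (q i)) : ℕ :=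
  ∏ i ∈ Finset.univ.filter (fun i => a i ≠ b i), q i

/-- The minimum weighted distance of an integer code `C ⊆ ℤ/q₁ℤ × ⋯ × ℤ/qₙℤ`. -/
noncomputable def minDist {ι : Type} [Fintype ι] (q : ι → ℕ)
    (C : Finset (∀ i : ι, ZMod (q i))) : ℕ :=
  sInf {d : ℕ | ∃ a ∈ C, ∃ b ∈ C, a ≠ b ∧ d = wdist q a b}

/-!
If `K · wt(I) > N`, then the projection of the code onto the coordinates outside `I`, whose
image has at most `N / wt(I) < K` values, is not injective. Two distinct codewords with the
same projection differ only inside `I`, so their distance is a sub-product of `wt(I)`.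
Since `K ≥ 2`, the set `I` of all coordinates qualifies, so the minimum is over a nonempty set.
-/

section IntegerCode

variable {ι : Type} [Fintype ι] {q : ι → ℕ}

lemma minDist_le_wdist {C : Finset (∀ i, ZMod (q i))} {a b : ∀ i, ZMod (q i)}
    (ha : a ∈ C) (hb : b ∈ C) (hab : a ≠ b) : minDist q C ≤ wdist q a b :=
  Nat.sInf_le ⟨a, ha, b, hb, hab, rfl⟩

lemma wdist_le_wtS_of_eq_on_compl [∀ i, NeZero (q i)] {a b : ∀ i, ZMod (q i)}
    {I : Finset ι} (hab : ∀ i ∉ I, a i = b i) : wdist q a b ≤ wtS q I := by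
  have hsub : Finset.univ.filter (fun i => a i ≠ b i) ⊆ I := fun i hi => by
    by_contra hiI
    exact (Finset.mem_filter.mp hi).2 (hab i hiI)
  exact Finset.prod_le_prod_of_subset_of_one_le' hsub fun i _ _ =>
    Nat.one_le_iff_ne_zero.mpr (NeZero.ne (q i))

lemma exists_ne_eq_on_compl_of_prod_compl_lt [DecidableEq ι] [∀ i, NeZero (q i)]
    {C : Finset (∀ i, ZMod (q i))} {I : Finset ι} (hC : ∏ i ∈ Iᶜ, q i < C.card) :
    ∃ a ∈ C, ∃ b ∈ C, a ≠ b ∧ ∀ i ∉ I, a i = b i := by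
  have hcard : (Finset.univ : Finset (∀ i : ↥Iᶜ, ZMod (q i))).card < C.card := by
    simpa only [Finset.card_univ, Fintype.card_pi, ZMod.card, Finset.prod_coe_sort Iᶜ q]
      using hC
  obtain ⟨a, ha, b, hb, hab, heq⟩ :=
    Finset.exists_ne_map_eq_of_card_lt_of_maps_to (f := fun v (i : ↥Iᶜ) => v i.1)
      hcard fun v _ => Finset.mem_univ _
  exact ⟨a, ha, b, hb, hab, fun i hi => congrFun heq ⟨i, Finset.mem_compl.mpr hi⟩⟩

theorem minDist_le_wtS_of_prod_lt [∀ i, NeZero (q i)] {C : Finset (∀ i, ZMod (q i))}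
    {I : Finset ι} (hI : ∏ i, q i < C.card * wtS q I) : minDist q C ≤ wtS q I := by
  classical
  have hcompl : ∏ i ∈ Iᶜ, q i < C.card := by
    refine Nat.lt_of_mul_lt_mul_left (a := wtS q I) ?_
    rw [wtS, Finset.prod_mul_prod_compl, mul_comm]
    exact hI
  obtain ⟨a, ha, b, hb, hab, hagree⟩ := exists_ne_eq_on_compl_of_prod_compl_lt hcompl
  exact (minDist_le_wdist ha hb hab).trans (wdist_le_wtS_of_eq_on_compl hagree)

end IntegerCode

theorem statement1_general {n : ℕ} (q : Fin n → ℕ) (hq : ∀ i, 2 ≤ q i)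
    (C : Finset (∀ i : Fin n, ZMod (q i))) (hK : 2 ≤ C.card) :
    (∀ I : Finset (Fin n), (∏ i, q i) < C.card * wtS q I → minDist q C ≤ wtS q I)
    ∧ minDist q C ≤
        sInf {w : ℕ | ∃ I : Finset (Fin n), (∏ i, q i) < C.card * wtS q I ∧ w = wtS q I} := by
  have : ∀ i, NeZero (q i) := fun i => ⟨by have := hq i; omega⟩
  refine ⟨fun I => minDist_le_wtS_of_prod_lt, ?_⟩
  have huniv : ∏ i, q i < C.card * wtS q Finset.univ := by
    have hN : 0 < ∏ i, q i := Finset.prod_pos fun i _ => by have := hq i; omega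
    rw [wtS]
    nlinarith
  refine le_csInf ⟨_, Finset.univ, huniv, rfl⟩ ?_
  rintro _ ⟨I, hI, rfl⟩
  exact minDist_le_wtS_of_prod_lt hI

/-- Rephrased Singleton bound: for every set of coordinates `I` with `K * wt(I) > N`
one has `D ≤ wt(I)`; in other words `D ≤ min {wt(I) ∣ K * wt(I) > N}`. -/
theorem statement1 {n : ℕ} (hn : 1 ≤ n) (q : Fin n → ℕ) (hq : ∀ i, 2 ≤ q i)
    (C : Finset (∀ i : Fin n, ZMod (q i))) (hK : 2 ≤ C.card) :
    (∀ I : Finset (Fin n), (∏ i, q i) < C.card * wtS q I → minDist q C ≤ wtS q I)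
    ∧ minDist q C ≤
        sInf {w : ℕ | ∃ I : Finset (Fin n), (∏ i, q i) < C.card * wtS q I ∧ w = wtS q I} :=
  statement1_general q hq C hK
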